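/- For any exponents β₁, ..., βₙ > -1 and any t > 0, the integral over the simplex Tₙ(t) = {(t₁,...,tₙ) ∈ (0,t)ⁿ : t₁ < ... < tₙ} of the product ∏_{j=1}^n (t_{j+1} - t_j)^{β_j} (with t_{n+1} = t) equals (∏_{j=1}^n Γ(β_j + 1)) / Γ(∑_{j=1}^n β_j + n + 1) · t^{∑_{j=1}^n β_j + n}. -/

import Mathlib

/-!
Write `s₋₁ = 0`, `sₙ = t` and `gⱼ = sⱼ - sⱼ₋₁` for the gaps of a point of the simplex; more
generally integrate `∏ⱼ₌₀ⁿ gⱼ ^ αⱼ`, the theorem being the case `α₀ = 0`. Integrating out the first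
coordinate `x = s₀ ∈ (0, s₁)` is a Beta integral,
`∫₀^{s₁} x ^ α₀ (s₁ - x) ^ α₁ dx = Γ(α₀+1) Γ(α₁+1) / Γ(α₀+α₁+2) · s₁ ^ (α₀+α₁+1)`,
which merges the first two gaps into one with exponent `α₀ + α₁ + 1`. Induction on the dimension
then gives `∏ⱼ Γ(αⱼ+1) / Γ(∑ⱼ αⱼ + n + 1) · t ^ (∑ⱼ αⱼ + n)`.
-/

open MeasureTheory Set Real
open scoped ENNReal

theorem integral_Ioo_rpow_mul_sub_rpow {a b c : ℝ} (ha : -1 < a) (hb : -1 < b) (hc : 0 < c) :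
    ∫ x in Ioo 0 c, x ^ a * (c - x) ^ b
      = Gamma (a + 1) * Gamma (b + 1) / Gamma (a + b + 2) * c ^ (a + b + 1) := by
  apply Complex.ofReal_injective
  have hβ := Complex.betaIntegral_scaled (a + 1) (b + 1) hc
  rw [Complex.betaIntegral_eq_Gamma_mul_div _ _ (by simp; linarith) (by simp; linarith),
    intervalIntegral.integral_of_le hc.le, integral_Ioc_eq_integral_Ioo] at hβ
  rw [← integral_complex_ofReal, setIntegral_congr_fun measurableSet_Ioo
    (g := fun x : ℝ => (x : ℂ) ^ ((a : ℂ) + 1 - 1) * ((c : ℂ) - x) ^ ((b : ℂ) + 1 - 1)), hβ]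
  · rw [show (a + b + 2 : ℝ) = (a + 1) + (b + 1) by ring]
    push_cast [← Complex.Gamma_ofReal, Complex.ofReal_cpow hc.le]
    ring_nf
  · intro x hx
    simp only [add_sub_cancel_right]
    push_cast [Complex.ofReal_cpow hx.1.le, Complex.ofReal_cpow (sub_pos.2 hx.2).le]
    rfl

/- The Beta integral is positive, so its integrand is integrable: otherwise the Bochner
integral would be the junk value `0`. -/
theorem lintegral_Ioo_rpow_mul_sub_rpow {a b c : ℝ} (ha : -1 < a) (hb : -1 < b) (hc : 0 < c) :
    ∫⁻ x in Ioo 0 c, ENNReal.ofReal (x ^ a * (c - x) ^ b)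
      = ENNReal.ofReal (Gamma (a + 1) * Gamma (b + 1) / Gamma (a + b + 2) * c ^ (a + b + 1)) := by
  have hpos : 0 < Gamma (a + 1) * Gamma (b + 1) / Gamma (a + b + 2) * c ^ (a + b + 1) := by
    have := Gamma_pos_of_pos (show 0 < a + 1 by linarith)
    have := Gamma_pos_of_pos (show 0 < b + 1 by linarith)
    have := Gamma_pos_of_pos (show 0 < a + b + 2 by linarith)
    positivity
  rw [← integral_Ioo_rpow_mul_sub_rpow ha hb hc] at hpos ⊢
  refine (ofReal_integral_eq_lintegral_ofReal (Integrable.of_integral_ne_zero hpos.ne') ?_).symm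
  filter_upwards [ae_restrict_mem measurableSet_Ioo] with x hx
  exact mul_nonneg (rpow_nonneg hx.1.le a) (rpow_nonneg (sub_pos.2 hx.2).le b)

theorem lintegral_fin_cons {E : Type*} [MeasureSpace E] [SigmaFinite (volume : Measure E)]
    {n : ℕ} {f : (Fin (n + 1) → E) → ℝ≥0∞} (hf : Measurable f) :
    ∫⁻ s, f s = ∫⁻ y : Fin n → E, ∫⁻ x : E, f (Fin.cons x y) := by
  set e := (MeasurableEquiv.piFinSuccAbove (fun _ : Fin (n + 1) => E) 0).symm
  rw [← (volume_preserving_piFinSuccAbove (fun _ : Fin (n + 1) => E) 0).symm.lintegral_comp_emb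
      e.measurableEmbedding, Measure.volume_eq_prod,
    lintegral_prod_symm (fun z => f (e z)) (hf.comp e.measurable).aemeasurable]
  simp [e, Fin.insertNthEquiv_zero, Fin.consEquiv]

lemma strictMono_fin_snoc_iff {α : Type*} [Preorder α] {n : ℕ} {s : Fin n → α} {a : α} :
    StrictMono (Fin.snoc s a : Fin (n + 1) → α) ↔ StrictMono s ∧ ∀ i, s i < a := by
  rw [← Fin.insertNth_last', Fin.strictMono_insertNth_iff]
  simp [Fin.castSucc_lt_last, Fin.not_le.2 (Fin.castSucc_lt_last _)]

section OrderedSimplex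

variable {n : ℕ}

/-- `simplexGap t s j = sⱼ - sⱼ₋₁`, with the conventions `s₋₁ = 0` and `sₙ = t`. -/
def simplexGap (t : ℝ) (s : Fin n → ℝ) (j : Fin (n + 1)) : ℝ :=
  (Fin.snoc s t : Fin (n + 1) → ℝ) j - (Fin.cons 0 s : Fin (n + 1) → ℝ) j

def orderedSimplex (n : ℕ) (t : ℝ) : Set (Fin n → ℝ) :=
  {s | ∀ j, 0 < simplexGap t s j}

lemma orderedSimplex_eq_setOf_strictMono (t : ℝ) :
    orderedSimplex n t = {s | StrictMono (Fin.cons 0 (Fin.snoc s t) : Fin (n + 2) → ℝ)} := by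
  ext s
  simp only [orderedSimplex, simplexGap, mem_ofPred_eq, sub_pos, Fin.strictMono_iff_lt_succ,
    Fin.cons_succ]
  simp only [Fin.cons_snoc_eq_snoc_cons, Fin.snoc_castSucc]

lemma setOf_strictMono_eq_orderedSimplex {t : ℝ} (ht : 0 < t) :
    {s : Fin n → ℝ | (∀ j, 0 < s j ∧ s j < t) ∧ StrictMono s} = orderedSimplex n t := by
  rw [orderedSimplex_eq_setOf_strictMono]
  ext s
  simp only [mem_ofPred_eq, Fin.strictMono_cons, strictMono_fin_snoc_iff, Fin.forall_fin_succ',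
    Fin.snoc_castSucc, Fin.snoc_last, forall_and]
  tauto

lemma simplexGap_succ (t : ℝ) (s : Fin n → ℝ) (j : Fin n) :
    simplexGap t s j.succ
      = (if h : (j : ℕ) + 1 < n then s ⟨(j : ℕ) + 1, h⟩ else t) - s j := by
  simp [simplexGap, Fin.snoc, Fin.castLT]

lemma simplexGap_cons (t x : ℝ) (y : Fin n → ℝ) :
    simplexGap t (Fin.cons x y : Fin (n + 1) → ℝ)
      = Fin.cons x (Fin.cons (simplexGap t y 0 - x) fun i => simplexGap t y i.succ) := by
  ext j
  induction j using Fin.cases with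
  | zero => simp [simplexGap]
  | succ j =>
    induction j using Fin.cases with
    | zero => simp [simplexGap, ← Fin.cons_snoc_eq_snoc_cons]
    | succ i => simp [simplexGap, ← Fin.cons_snoc_eq_snoc_cons]

lemma cons_mem_orderedSimplex_iff {t x : ℝ} {y : Fin n → ℝ} :
    (Fin.cons x y : Fin (n + 1) → ℝ) ∈ orderedSimplex (n + 1) t
      ↔ y ∈ orderedSimplex n t ∧ x ∈ Ioo 0 (simplexGap t y 0) := by
  simp only [orderedSimplex, mem_ofPred_eq, simplexGap_cons, Fin.forall_fin_succ, Fin.cons_zero,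
    Fin.cons_succ, sub_pos, mem_Ioo]
  constructor
  · rintro ⟨hx, hxy, hy⟩
    exact ⟨⟨hx.trans hxy, hy⟩, hx, hxy⟩
  · rintro ⟨⟨-, hy⟩, hx, hxy⟩
    exact ⟨hx, hxy, hy⟩

lemma continuous_simplexGap (t : ℝ) (j : Fin (n + 1)) :
    Continuous fun s : Fin n → ℝ => simplexGap t s j :=
  ((continuous_apply j).comp (continuous_id.finSnoc (A := fun _ => ℝ) continuous_const)).sub
    ((continuous_apply j).comp (continuous_const.finCons (A := fun _ => ℝ) continuous_id))

lemma measurableSet_orderedSimplex (t : ℝ) : MeasurableSet (orderedSimplex n t) := by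
  rw [orderedSimplex, ofPred_forall]
  exact MeasurableSet.iInter fun j =>
    measurableSet_lt measurable_const (continuous_simplexGap t j).measurable

lemma measurable_prod_simplexGap_rpow (t : ℝ) (α : Fin (n + 1) → ℝ) :
    Measurable fun s : Fin n → ℝ => ∏ j, simplexGap t s j ^ α j :=
  Finset.measurable_prod _ fun j _ => (continuous_simplexGap t j).measurable.pow_const _

lemma prod_simplexGap_cons_rpow (t x : ℝ) (y : Fin n → ℝ) (α : Fin (n + 2) → ℝ) :
    ∏ j, simplexGap t (Fin.cons x y : Fin (n + 1) → ℝ) j ^ α j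
      = x ^ α 0 * (simplexGap t y 0 - x) ^ α 1 *
          ∏ i : Fin n, simplexGap t y i.succ ^ α i.succ.succ := by
  simp [simplexGap_cons, Fin.prod_univ_succ, mul_assoc]

lemma lintegral_cons_indicator_orderedSimplex {t : ℝ} {α : Fin (n + 2) → ℝ}
    (hα₀ : -1 < α 0) (hα₁ : -1 < α 1) (y : Fin n → ℝ) :
    ∫⁻ x, (orderedSimplex (n + 1) t).indicator
        (fun s => ENNReal.ofReal (∏ j, simplexGap t s j ^ α j)) (Fin.cons x y)
      = (orderedSimplex n t).indicator (fun y => ENNReal.ofReal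
          (Gamma (α 0 + 1) * Gamma (α 1 + 1) / Gamma (α 0 + α 1 + 2) *
            ∏ j, simplexGap t y j ^ (Fin.cons (α 0 + α 1 + 1) fun i => α i.succ.succ :
              Fin (n + 1) → ℝ) j)) y := by
  by_cases hy : y ∈ orderedSimplex n t
  swap
  · simp [cons_mem_orderedSimplex_iff, hy]
  have hc : 0 < simplexGap t y 0 := hy 0
  have hR : 0 ≤ ∏ i : Fin n, simplexGap t y i.succ ^ α i.succ.succ :=
    Finset.prod_nonneg fun i _ => rpow_nonneg (hy i.succ).le _
  have hsection : (fun x => (Fin.cons x y : Fin (n + 1) → ℝ)) ⁻¹' orderedSimplex (n + 1) t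
      = Ioo 0 (simplexGap t y 0) := by
    ext x
    simp [cons_mem_orderedSimplex_iff, hy]
  calc ∫⁻ x, (orderedSimplex (n + 1) t).indicator
        (fun s => ENNReal.ofReal (∏ j, simplexGap t s j ^ α j)) (Fin.cons x y)
      = ∫⁻ x in Ioo 0 (simplexGap t y 0),
          ENNReal.ofReal (∏ j, simplexGap t (Fin.cons x y) j ^ α j) := by
        rw [← lintegral_indicator measurableSet_Ioo, ← hsection]
        rfl
    _ = ∫⁻ x in Ioo 0 (simplexGap t y 0),
          ENNReal.ofReal (x ^ α 0 * (simplexGap t y 0 - x) ^ α 1) *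
            ENNReal.ofReal (∏ i : Fin n, simplexGap t y i.succ ^ α i.succ.succ) := by
        refine setLIntegral_congr_fun measurableSet_Ioo fun x hx => ?_
        rw [prod_simplexGap_cons_rpow, ENNReal.ofReal_mul' hR]
    _ = _ := by
        rw [lintegral_mul_const' _ _ ENNReal.ofReal_ne_top,
          lintegral_Ioo_rpow_mul_sub_rpow hα₀ hα₁ hc, ← ENNReal.ofReal_mul' hR,
          indicator_of_mem hy, Fin.prod_univ_succ]
        simp only [Fin.cons_zero, Fin.cons_succ, mul_assoc]

theorem lintegral_orderedSimplex_prod_simplexGap_rpow {t : ℝ} (ht : 0 < t) :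
    ∀ {n : ℕ} (α : Fin (n + 1) → ℝ), (∀ j, -1 < α j) →
      ∫⁻ s in orderedSimplex n t, ENNReal.ofReal (∏ j, simplexGap t s j ^ α j)
        = ENNReal.ofReal
            ((∏ j, Gamma (α j + 1)) / Gamma (∑ j, α j + n + 1) * t ^ (∑ j, α j + n))
  | 0, α, hα => by
    have hgap (s : Fin 0 → ℝ) : simplexGap t s 0 = t := by simp [simplexGap, Fin.snoc]
    have huniv : orderedSimplex 0 t = univ := by
      ext s
      simp [orderedSimplex, hgap, ht]
    have hΓ : Gamma (α 0 + 1) ≠ 0 := (Gamma_pos_of_pos (by linarith [hα 0])).ne'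
    simp [huniv, hgap, hΓ, volume_pi]
  | n + 1, α, hα => by
    set α' : Fin (n + 1) → ℝ := Fin.cons (α 0 + α 1 + 1) fun i => α i.succ.succ
    have hα' : ∀ j, -1 < α' j :=
      Fin.cases (by simp [α']; linarith [hα 0, hα 1]) fun i => hα i.succ.succ
    have hB : 0 ≤ Gamma (α 0 + 1) * Gamma (α 1 + 1) / Gamma (α 0 + α 1 + 2) := by
      have := Gamma_pos_of_pos (show 0 < α 0 + 1 by linarith [hα 0])
      have := Gamma_pos_of_pos (show 0 < α 1 + 1 by linarith [hα 1])
      have := Gamma_pos_of_pos (show 0 < α 0 + α 1 + 2 by linarith [hα 0, hα 1])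
      positivity
    rw [← lintegral_indicator (measurableSet_orderedSimplex t),
      lintegral_fin_cons ((measurable_prod_simplexGap_rpow t α).ennreal_ofReal.indicator
        (measurableSet_orderedSimplex t))]
    simp_rw [lintegral_cons_indicator_orderedSimplex (hα 0) (hα 1)]
    rw [lintegral_indicator (measurableSet_orderedSimplex t)]
    simp_rw [ENNReal.ofReal_mul hB]
    rw [lintegral_const_mul' _ _ ENNReal.ofReal_ne_top,
      lintegral_orderedSimplex_prod_simplexGap_rpow ht α' hα', ← ENNReal.ofReal_mul hB]
    congr 1
    have hsum : ∑ j, α' j + n = ∑ j, α j + ↑(n + 1) := by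
      simp only [α', Fin.sum_univ_succ, Fin.cons_zero, Fin.cons_succ, Fin.succ_zero_eq_one]
      push_cast
      ring
    have hprod : ∏ j, Gamma (α' j + 1)
        = Gamma (α 0 + α 1 + 2) * ∏ i : Fin n, Gamma (α i.succ.succ + 1) := by
      simp only [α', Fin.prod_univ_succ, Fin.cons_zero, Fin.cons_succ]
      ring_nf
    have hΓ : Gamma (α 0 + α 1 + 2) ≠ 0 := (Gamma_pos_of_pos (by linarith [hα 0, hα 1])).ne'
    rw [hsum, hprod, Fin.prod_univ_succ, Fin.prod_univ_succ, Fin.succ_zero_eq_one]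
    field_simp

theorem integral_orderedSimplex_prod_simplexGap_rpow {t : ℝ} (ht : 0 < t)
    (α : Fin (n + 1) → ℝ) (hα : ∀ j, -1 < α j) :
    ∫ s in orderedSimplex n t, ∏ j, simplexGap t s j ^ α j
      = (∏ j, Gamma (α j + 1)) / Gamma (∑ j, α j + n + 1) * t ^ (∑ j, α j + n) := by
  have hnonneg :
      0 ≤ᵐ[volume.restrict (orderedSimplex n t)] fun s => ∏ j, simplexGap t s j ^ α j := by
    filter_upwards [ae_restrict_mem (measurableSet_orderedSimplex t)] with s hs
    exact Finset.prod_nonneg fun j _ => rpow_nonneg (hs j).le _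
  have hΓ : 0 < Gamma (∑ j, α j + n + 1) := by
    refine Gamma_pos_of_pos ?_
    have := Finset.sum_pos (fun j _ => show 0 < α j + 1 by linarith [hα j]) Finset.univ_nonempty
    simpa [Finset.sum_add_distrib, add_assoc] using this
  have hΓprod : 0 < ∏ j, Gamma (α j + 1) :=
    Finset.prod_pos fun j _ => Gamma_pos_of_pos (by linarith [hα j])
  rw [integral_eq_lintegral_of_nonneg_ae hnonneg
      (measurable_prod_simplexGap_rpow t α).aestronglyMeasurable,
    lintegral_orderedSimplex_prod_simplexGap_rpow ht α hα, ENNReal.toReal_ofReal (by positivity)]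

end OrderedSimplex

/-- Simplex integral formula (Lemma 3.5):
`∫_{Tₙ(t)} ∏ⱼ (t_{j+1} - t_j)^{βⱼ} dt = (∏ⱼ Γ(βⱼ+1)) / Γ(∑ βⱼ + n + 1) · t^{∑ βⱼ + n}`,
with the convention `t_{n+1} = t`. -/
theorem simplex_integral_formula (n : ℕ) (β : Fin n → ℝ) (hβ : ∀ j, -1 < β j)
    (t : ℝ) (ht : 0 < t) :
    (∫ s in {s : Fin n → ℝ | (∀ j, 0 < s j ∧ s j < t) ∧ StrictMono s},
        ∏ j : Fin n,
          ((if h : (j : ℕ) + 1 < n then s ⟨(j : ℕ) + 1, h⟩ else t) - s j) ^ (β j))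
      = (∏ j : Fin n, Real.Gamma (β j + 1)) / Real.Gamma ((∑ j : Fin n, β j) + n + 1)
        * t ^ ((∑ j : Fin n, β j) + n) := by
  have h := integral_orderedSimplex_prod_simplexGap_rpow ht (Fin.cons 0 β)
    (Fin.cases (by norm_num) hβ)
  rw [setOf_strictMono_eq_orderedSimplex ht]
  simpa [Fin.prod_univ_succ, Fin.sum_univ_succ, simplexGap_succ] using h
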